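/- Assume r and θ are nonconstant and the parametrization is proper. Let I ⊆ Ω be a set such that there are infinitely many t ∈ I for which there exists s ∈ I with s ≠ t and P(s) = P(t) (i.e., infinitely many parameters in I generating self-intersections of the curve whose second parameter also lies in I). Then θ is unbounded on I; consequently, either the closure of I contains a real root t₀ of D at which |θ(t)| → ∞ from at least one side, or I is unbounded above with θ(t) → ±∞ as t → +∞, or I is unbounded below with θ(t) → ±∞ as t → −∞. In particular, the closure of I in ℝ ∪ {±∞} contains a value generating a limit point, a limit circle, or a spiral branch of the curve. -/

import Mathlib

open Filter

/-- The domain Ω = {t : B(t) ≠ 0 and D(t) ≠ 0}. -/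
def polarDomain (B D : Polynomial ℝ) : Set ℝ :=
  {t : ℝ | B.eval t ≠ 0 ∧ D.eval t ≠ 0}

/-- The rational function defined by a pair of polynomials, e.g. r(t) = A(t)/B(t). -/
noncomputable def ratFun (A B : Polynomial ℝ) (t : ℝ) : ℝ :=
  A.eval t / B.eval t

/-- The curve in Cartesian coordinates: P(t) = (r(t)·cos(θ(t)), r(t)·sin(θ(t))). -/
noncomputable def polarCurve (A B C D : Polynomial ℝ) (t : ℝ) : ℝ × ℝ :=
  (ratFun A B t * Real.cos (ratFun C D t), ratFun A B t * Real.sin (ratFun C D t))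

/-- Properness: outside a finite set F, (r(t), θ(t)) = (r(s), θ(s)) implies t = s. -/
def IsProperPolar (A B C D : Polynomial ℝ) : Prop :=
  ∃ F : Set ℝ, F.Finite ∧ ∀ t s : ℝ, t ∈ polarDomain B D → s ∈ polarDomain B D →
    t ∉ F → s ∉ F → ratFun A B t = ratFun A B s → ratFun C D t = ratFun C D s → t = s

/-!
Write `r = A/B` and `θ = C/D`, and suppose `|θ| ≤ M` on `I`. At a self-intersection
`P(s) = P(t)` with `r(t) ≠ 0` we have `r(s) = ±r(t)` and `θ(s) = θ(t) + kπ` with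
`|k| ≤ 2M/π`, and properness gives `k ≠ 0` outside finitely many parameters. The curve
`t ↦ (r(t)², θ(t))` lies on an irreducible algebraic curve `h(x, y) = 0` of positive degree
in `y` (a dimension count, then a factorization). For `κ ≠ 0`, `h` cannot divide its translate
`h(x, y + κ)`, since it would then be periodic in `y`; so their resultant is a nonzero polynomial
in `x`, vanishing at `r(t)²` for every `t` whose partner `s` satisfies `θ(s) = θ(t) + κ`. Hence
only finitely many parameters of `I` generate self-intersections, and `θ` is unbounded on `I`.

A rational function is bounded on every bounded set whose closure avoids its poles, and, when
`deg C ≤ deg D`, near infinity. So if `θ` is unbounded on `I`, either a pole lies in the closure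
of `I`, where `|θ| → ∞`, or `deg C > deg D` and `I` is unbounded in a direction in which
`θ → ±∞`.
-/

open Polynomial Bornology Real
open scoped Polynomial.Bivariate

lemma natDegree_pow_le_mul {R : Type*} [Semiring R] {p : R[X]} {i N : ℕ} (hi : i ≤ N) :
    (p ^ i).natDegree ≤ N * p.natDegree :=
  natDegree_pow_le.trans (Nat.mul_le_mul_right _ hi)

section Translation

variable {R : Type*} [CommRing R] [IsDomain R]

lemma taylor_eq_self_of_dvd {p : R[X]} {c : R} (hp : p ≠ 0) (h : p ∣ taylor c p) :
    taylor c p = p := by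
  obtain ⟨q, hq⟩ := h
  have hq0 : q ≠ 0 := by
    rintro rfl
    exact hp (by simpa using hq)
  have hdeg : q.natDegree = 0 := by
    have := congrArg natDegree hq
    rw [natDegree_taylor, natDegree_mul hp hq0] at this
    omega
  rw [eq_C_of_natDegree_eq_zero hdeg] at hq
  have hlc := congrArg leadingCoeff hq
  rw [leadingCoeff_taylor, leadingCoeff_mul, leadingCoeff_C] at hlc
  have hq1 : q.coeff 0 = 1 :=
    mul_left_cancel₀ (leadingCoeff_ne_zero.mpr hp) (hlc.symm.trans (mul_one _).symm)
  rw [hq, hq1, C_1, mul_one]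

/-- `p` takes the value `p(0)` at the infinitely many points `n * c`. -/
lemma natDegree_eq_zero_of_taylor_eq_self [CharZero R] {p : R[X]} {c : R} (hc : c ≠ 0)
    (h : taylor c p = p) : p.natDegree = 0 := by
  have hiter : ∀ n : ℕ, taylor ((n : R) * c) p = p := fun n => by
    induction n with
    | zero => simp
    | succ n ih => rw [Nat.cast_succ, add_one_mul, add_comm, ← taylor_taylor, ih, h]
  have hconst : p - C (p.eval 0) = 0 := by
    refine eq_zero_of_infinite_isRoot _ (Set.infinite_of_injective_forall_mem
      (f := fun n : ℕ => (n : R) * c) (fun m n hmn => ?_) fun n => ?_)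
    · exact Nat.cast_injective (mul_right_cancel₀ hc hmn)
    · rw [Set.mem_ofPred_eq, IsRoot, eval_sub, eval_C, ← zero_add ((n : R) * c), ← taylor_eval,
        hiter n, sub_self]
  rw [sub_eq_zero.mp hconst, natDegree_C]

lemma dvd_or_resultant_ne_zero [NormalizedGCDMonoid R] {f : R[X]} (hf : Irreducible f)
    (hf0 : f.natDegree ≠ 0) (g : R[X]) : f ∣ g ∨ resultant f g ≠ 0 := by
  let K := FractionRing R
  have hinj := IsFractionRing.injective R K
  refine or_iff_not_imp_left.mpr fun hdvd hres => ?_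
  have hprim := hf.isPrimitive hf0
  have hcop : IsCoprime (f.map (algebraMap R K)) (g.map (algebraMap R K)) :=
    ((hprim.irreducible_iff_irreducible_map_fraction_map (K := K)).mp hf).coprime_iff_not_dvd.mpr
      (mt hprim.dvd_of_fraction_map_dvd_fraction_map hdvd)
  apply resultant_ne_zero _ _ hcop
  rw [natDegree_map_eq_of_injective hinj, natDegree_map_eq_of_injective hinj, resultant_map_map,
    hres, map_zero]

end Translation

section RationalFunction

variable {P Q : ℝ[X]}

lemma ratFun_pow (n : ℕ) (t : ℝ) : ratFun (P ^ n) (Q ^ n) t = ratFun P Q t ^ n := by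
  simp [ratFun, div_pow]

lemma ratFun_mul_eval {t : ℝ} (ht : Q.eval t ≠ 0) : ratFun P Q t * Q.eval t = P.eval t :=
  div_mul_cancel₀ _ ht

lemma polarDomain_pow_left {n : ℕ} (hn : n ≠ 0) (D : ℝ[X]) :
    polarDomain (Q ^ n) D = polarDomain Q D := by
  simp [polarDomain, hn]

lemma polarDomain_infinite (hQ : Q ≠ 0) {D : ℝ[X]} (hD : D ≠ 0) : (polarDomain Q D).Infinite := by
  refine ((finite_setOfPred_isRoot hQ).union (finite_setOfPred_isRoot hD)).infinite_compl.mono ?_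
  intro t ht
  simpa [polarDomain, not_or] using ht

lemma sub_C_mul_ne_zero (hPQ : IsCoprime P Q) (hP : ¬ (P.natDegree = 0 ∧ Q.natDegree = 0))
    (c : ℝ) : P - C c * Q ≠ 0 := by
  intro h
  have hPc : P = C c * Q := sub_eq_zero.mp h
  have hQ : Q.natDegree = 0 :=
    natDegree_eq_zero_of_isUnit (hPQ.isUnit_of_dvd' (hPc ▸ dvd_mul_left Q (C c)) dvd_rfl)
  exact hP ⟨by simpa [hPc, hQ] using natDegree_C_mul_le c Q, hQ⟩

lemma finite_setOf_ratFun_eq (hPQ : IsCoprime P Q) (hP : ¬ (P.natDegree = 0 ∧ Q.natDegree = 0))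
    (c : ℝ) : {t | Q.eval t ≠ 0 ∧ ratFun P Q t = c}.Finite := by
  refine (finite_setOfPred_isRoot (sub_C_mul_ne_zero hPQ hP c)).subset ?_
  rintro t ⟨ht, rfl⟩
  simp [ratFun_mul_eval ht]

lemma finite_setOf_ratFun_mem (hPQ : IsCoprime P Q) (hP : ¬ (P.natDegree = 0 ∧ Q.natDegree = 0))
    {s : Set ℝ} (hs : s.Finite) : {t | Q.eval t ≠ 0 ∧ ratFun P Q t ∈ s}.Finite :=
  (hs.biUnion fun c _ => finite_setOf_ratFun_eq hPQ hP c).subset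
    fun _ ht => Set.mem_biUnion ht.2 ⟨ht.1, rfl⟩

lemma ratFun_pow_mul_pow {i N : ℕ} (hi : i ≤ N) {t : ℝ} (ht : Q.eval t ≠ 0) :
    ratFun P Q t ^ i * Q.eval t ^ N = P.eval t ^ i * Q.eval t ^ (N - i) := by
  rw [← Nat.add_sub_cancel' hi, pow_add, Nat.add_sub_cancel_left, ← mul_assoc, ← mul_pow,
    ratFun_mul_eval ht]

lemma finite_setOf_eval_ratFun_eq_zero (hPQ : IsCoprime P Q)
    (hP : ¬ (P.natDegree = 0 ∧ Q.natDegree = 0)) {p : ℝ[X]} (hp : p ≠ 0) :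
    {t | Q.eval t ≠ 0 ∧ p.eval (ratFun P Q t) = 0}.Finite :=
  finite_setOf_ratFun_mem hPQ hP (finite_setOfPred_isRoot hp)

variable (P Q) in
lemma exists_eval_eq_eval_ratFun_mul_pow (p : ℝ[X]) :
    ∃ (N : ℝ[X]) (m : ℕ), ∀ t, Q.eval t ≠ 0 → N.eval t = p.eval (ratFun P Q t) * Q.eval t ^ m := by
  induction p using Polynomial.induction_on' with
  | add p q hp hq =>
    obtain ⟨N₁, m₁, h₁⟩ := hp
    obtain ⟨N₂, m₂, h₂⟩ := hq
    refine ⟨N₁ * Q ^ m₂ + N₂ * Q ^ m₁, m₁ + m₂, fun t ht => ?_⟩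
    simp only [eval_add, eval_mul, eval_pow, h₁ t ht, h₂ t ht]
    ring
  | monomial k a =>
    refine ⟨C a * P ^ k, k, fun t ht => ?_⟩
    simp only [eval_mul, eval_C, eval_pow, eval_monomial]
    rw [← ratFun_mul_eval (P := P) ht]
    ring

end RationalFunction

section VanishingOnCurve

variable (P Q C D : ℝ[X])

lemma exists_eval_eq_evalEval_ratFun_mul_pow (u : ℝ[X][Y]) :
    ∃ (N : ℝ[X]) (m n : ℕ), ∀ t ∈ polarDomain Q D,
      N.eval t = u.evalEval (ratFun P Q t) (ratFun C D t) * Q.eval t ^ m * D.eval t ^ n := by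
  induction u using Polynomial.induction_on' with
  | add u v hu hv =>
    obtain ⟨N₁, m₁, n₁, h₁⟩ := hu
    obtain ⟨N₂, m₂, n₂, h₂⟩ := hv
    refine ⟨N₁ * Q ^ m₂ * D ^ n₂ + N₂ * Q ^ m₁ * D ^ n₁, m₁ + m₂, n₁ + n₂, fun t ht => ?_⟩
    simp only [eval_add, eval_mul, eval_pow, h₁ t ht, h₂ t ht, evalEval_add]
    ring
  | monomial k a =>
    obtain ⟨N, m, h⟩ := exists_eval_eq_eval_ratFun_mul_pow P Q a
    refine ⟨N * C ^ k, m, k, fun t ht => ?_⟩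
    simp only [eval_mul, eval_pow, h t ht.1, evalEval, eval_monomial, eval_C]
    rw [← ratFun_mul_eval (P := C) ht.2]
    ring

def VanishesOnCurve (u : ℝ[X][Y]) : Prop :=
  ∀ t ∈ polarDomain Q D, u.evalEval (ratFun P Q t) (ratFun C D t) = 0

variable {P Q C D}

lemma vanishesOnCurve_of_infinite {u : ℝ[X][Y]}
    (hu : {t ∈ polarDomain Q D | u.evalEval (ratFun P Q t) (ratFun C D t) = 0}.Infinite) :
    VanishesOnCurve P Q C D u := by
  obtain ⟨N, m, n, hN⟩ := exists_eval_eq_evalEval_ratFun_mul_pow P Q C D u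
  have hN0 : N = 0 := eq_zero_of_infinite_isRoot N <| hu.mono fun t ht => by
    simp [IsRoot, hN t ht.1, ht.2]
  intro t ht
  simpa [hN0, ht.1, ht.2] using (hN t ht).symm

lemma VanishesOnCurve.or_of_mul (hQ : Q ≠ 0) (hD : D ≠ 0) {u v : ℝ[X][Y]}
    (huv : VanishesOnCurve P Q C D (u * v)) :
    VanishesOnCurve P Q C D u ∨ VanishesOnCurve P Q C D v := by
  have hcover : polarDomain Q D ⊆
      {t ∈ polarDomain Q D | u.evalEval (ratFun P Q t) (ratFun C D t) = 0} ∪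
      {t ∈ polarDomain Q D | v.evalEval (ratFun P Q t) (ratFun C D t) = 0} := fun t ht => by
    simpa [ht, evalEval_mul] using huv t ht
  rcases Set.infinite_union.mp ((polarDomain_infinite hQ hD).mono hcover) with h | h
  exacts [.inl (vanishesOnCurve_of_infinite h), .inr (vanishesOnCurve_of_infinite h)]

variable (P Q C D) in
/-- Dimension count: the `(N + 1)²` products `P^i Q^(N-i) C^j D^(N-j)`, `i, j ≤ N`, lie in a
space of polynomials of dimension `N * S + 1`, so for `N = S + 1` they are linearly dependent. -/
lemma exists_ne_zero_vanishesOnCurve : ∃ u : ℝ[X][Y], u ≠ 0 ∧ VanishesOnCurve P Q C D u := by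
  set S := P.natDegree + Q.natDegree + C.natDegree + D.natDegree
  set N := S + 1
  let w : Fin (N + 1) × Fin (N + 1) → ℝ[X] := fun p =>
    P ^ (p.1 : ℕ) * Q ^ (N - p.1) * C ^ (p.2 : ℕ) * D ^ (N - p.2)
  have hw : ∀ p, w p ∈ degreeLT ℝ (N * S + 1) := fun p => by
    have hi : (p.1 : ℕ) ≤ N := Nat.lt_succ_iff.mp p.1.isLt
    have hj : (p.2 : ℕ) ≤ N := Nat.lt_succ_iff.mp p.2.isLt
    have hdeg : (w p).natDegree ≤ N * S := by
      refine (natDegree_mul_le_of_le (natDegree_mul_le_of_le (natDegree_mul_le_of_le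
        (natDegree_pow_le_mul hi) (natDegree_pow_le_mul (N.sub_le _)))
        (natDegree_pow_le_mul hj)) (natDegree_pow_le_mul (N.sub_le _))).trans_eq ?_
      ring
    rw [mem_degreeLT]
    exact (degree_le_natDegree.trans (WithBot.coe_le_coe.mpr hdeg)).trans_lt
      (WithBot.coe_lt_coe.mpr (Nat.lt_succ_self _))
  have hdep : ¬ LinearIndependent ℝ w := fun hli => by
    have := Submodule.finrank_mono (Submodule.span_le.mpr (Set.range_subset_iff.mpr hw))
    rw [finrank_span_eq_card hli, (degreeLTEquiv ℝ _).finrank_eq, Module.finrank_fin_fun,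
      Fintype.card_prod, Fintype.card_fin] at this
    nlinarith [show N = S + 1 from rfl]
  obtain ⟨g, hg, p₀, hp₀⟩ := Fintype.not_linearIndependent_iff.mp hdep
  refine ⟨∑ p, monomial p.2 (monomial p.1 (g p)), fun h0 => hp₀ ?_, fun t ht => ?_⟩
  · have := congrArg (fun u : ℝ[X][Y] => (u.coeff p₀.2).coeff p₀.1) h0
    simpa [finsetSum_coeff, coeff_monomial, Fin.val_inj, Fintype.sum_prod_type] using this
  · have hcleared : (∑ p, monomial p.2 (monomial p.1 (g p))).evalEval (ratFun P Q t)
        (ratFun C D t) * (Q.eval t ^ N * D.eval t ^ N) = (∑ p, g p • w p).eval t := by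
      simp only [evalEval_finsetSum, Finset.sum_mul, eval_finsetSum]
      refine Finset.sum_congr rfl fun p _ => ?_
      simp only [evalEval, eval_monomial, eval_C, eval_smul, eval_mul, eval_pow, smul_eq_mul, w]
      linear_combination
        g p * ratFun C D t ^ (p.2 : ℕ) * D.eval t ^ N *
          ratFun_pow_mul_pow (P := P) (Nat.lt_succ_iff.mp p.1.isLt) ht.1 +
        g p * P.eval t ^ (p.1 : ℕ) * Q.eval t ^ (N - p.1) *
          ratFun_pow_mul_pow (P := C) (Nat.lt_succ_iff.mp p.2.isLt) ht.2
    rw [hg, eval_zero] at hcleared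
    exact (mul_eq_zero.mp hcleared).resolve_right (mul_ne_zero (pow_ne_zero _ ht.1)
      (pow_ne_zero _ ht.2))

lemma exists_irreducible_vanishesOnCurve (hQ : Q ≠ 0) (hD : D ≠ 0) (hPQ : IsCoprime P Q)
    (hP : ¬ (P.natDegree = 0 ∧ Q.natDegree = 0)) :
    ∃ h : ℝ[X][Y], Irreducible h ∧ h.natDegree ≠ 0 ∧ VanishesOnCurve P Q C D h := by
  have hΩ := polarDomain_infinite hQ hD
  obtain ⟨u, hu0, hu⟩ := exists_ne_zero_vanishesOnCurve P Q C D
  obtain ⟨h, hirr, hh⟩ : ∃ h, Irreducible h ∧ VanishesOnCurve P Q C D h := by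
    induction u using WfDvdMonoid.induction_on_irreducible with
    | zero => exact absurd rfl hu0
    | unit u hunit =>
      obtain ⟨t, ht⟩ := hΩ.nonempty
      exact absurd (hu t ht) (hunit.map (evalEvalRingHom _ _)).ne_zero
    | mul a i ha hi ih =>
      exact (hu.or_of_mul hQ hD).elim (fun hi' => ⟨i, hi, hi'⟩) (ih ha)
  refine ⟨h, hirr, fun hdeg => hΩ ?_, hh⟩
  rw [eq_C_of_natDegree_eq_zero hdeg] at hh hirr
  refine (finite_setOf_eval_ratFun_eq_zero hPQ hP
    (C_ne_zero.mp hirr.ne_zero)).subset fun t ht => ⟨ht.1, ?_⟩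
  simpa only [evalEval_C] using hh t ht

end VanishingOnCurve

lemma evalEval_taylor_C (x y κ : ℝ) (h : ℝ[X][Y]) :
    (taylor (C κ) h).evalEval x y = h.evalEval x (y + κ) := by
  rw [evalEval, taylor_eval, ← C_add]

/-- Either `h` divides its translate `h(x, y + κ)`, which makes `h` periodic in `y`, or their
resultant is a nonzero polynomial in `x` vanishing at `P(t)/Q(t)` for every `t` in the set. -/
lemma finite_setOf_evalEval_add_eq_zero {P Q C D : ℝ[X]} (hPQ : IsCoprime P Q)
    (hP : ¬ (P.natDegree = 0 ∧ Q.natDegree = 0)) {h : ℝ[X][Y]} (hirr : Irreducible h)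
    (hdeg : h.natDegree ≠ 0) (hh : VanishesOnCurve P Q C D h) {κ : ℝ} (hκ : κ ≠ 0) :
    {t ∈ polarDomain Q D | h.evalEval (ratFun P Q t) (ratFun C D t + κ) = 0}.Finite := by
  rcases dvd_or_resultant_ne_zero hirr hdeg (taylor (Polynomial.C κ) h) with hdvd | hres
  · exact absurd (natDegree_eq_zero_of_taylor_eq_self (Polynomial.C_ne_zero.mpr hκ)
      (taylor_eq_self_of_dvd hirr.ne_zero hdvd)) hdeg
  · obtain ⟨p, q, -, -, hpq⟩ :=
      exists_mul_add_mul_eq_C_resultant h (taylor (Polynomial.C κ) h) le_rfl le_rfl (.inl hdeg)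
    refine (finite_setOf_eval_ratFun_eq_zero hPQ hP hres).subset fun t ht => ⟨ht.1.1, ?_⟩
    have := congrArg (evalEval (ratFun P Q t) (ratFun C D t)) hpq
    rwa [evalEval_C, evalEval_add, evalEval_mul, evalEval_mul, hh t ht.1, evalEval_taylor_C,
      ht.2, zero_mul, zero_mul, add_zero, eq_comm] at this

lemma exists_int_of_polar_eq {ρ ρ' φ φ' : ℝ} (hρ : ρ ≠ 0) (hx : ρ' * cos φ' = ρ * cos φ)
    (hy : ρ' * sin φ' = ρ * sin φ) : ∃ k : ℤ, φ' = φ + k * π ∧ ρ' = (-1) ^ k * ρ := by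
  have hcos : ρ' * cos (φ' - φ) = ρ := by
    rw [cos_sub]
    linear_combination cos φ * hx + sin φ * hy + ρ * sin_sq_add_cos_sq φ
  have hsin : ρ' * sin (φ' - φ) = 0 := by
    rw [sin_sub]
    linear_combination cos φ * hy - sin φ * hx
  have hρ' : ρ' ≠ 0 := by
    rintro rfl
    exact hρ (by simpa using hcos.symm)
  obtain ⟨k, hk⟩ := sin_eq_zero_iff.mp ((mul_eq_zero.mp hsin).resolve_left hρ')
  rw [← hk, cos_int_mul_pi] at hcos
  have hsq : ((-1 : ℝ) ^ k) ^ 2 = 1 := by rw [← sq_abs, abs_neg_one_zpow, one_pow]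
  exact ⟨k, by linarith, by linear_combination (-ρ') * hsq + (-1 : ℝ) ^ k * hcos⟩

def selfIntersectionParams (A B C D : ℝ[X]) (I : Set ℝ) : Set ℝ :=
  {t ∈ I | ∃ s ∈ I, s ≠ t ∧ polarCurve A B C D s = polarCurve A B C D t}

lemma abs_le_ceil_of_abs_mul_pi_le {k : ℤ} {M : ℝ} (h : |(k : ℝ) * π| ≤ M) :
    |k| ≤ ⌈M / π⌉ := by
  rw [abs_mul, abs_of_pos pi_pos, ← le_div_iff₀ pi_pos] at h
  exact_mod_cast h.trans (Int.le_ceil _)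

section SelfIntersections

variable {A B C D : ℝ[X]} {F I : Set ℝ} {M : ℝ}

/-- `hFt` keeps the partner `s` outside `F`, so that properness excludes `k = 0`. -/
lemma exists_int_shift_of_mem_selfIntersectionParams
    (hF : ∀ t s, t ∈ polarDomain B D → s ∈ polarDomain B D → t ∉ F → s ∉ F →
      ratFun A B t = ratFun A B s → ratFun C D t = ratFun C D s → t = s)
    (hI : I ⊆ polarDomain B D) (hM : ∀ t ∈ I, |ratFun C D t| ≤ M) {t : ℝ}
    (ht : t ∈ selfIntersectionParams A B C D I) (htF : t ∉ F) (hrt : ratFun A B t ≠ 0)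
    (hFt : ∀ s ∈ F, ratFun A B s ^ 2 ≠ ratFun A B t ^ 2) :
    ∃ s ∈ I, ∃ k : ℤ, k ≠ 0 ∧ |k| ≤ ⌈2 * M / π⌉ ∧ ratFun A B s ^ 2 = ratFun A B t ^ 2 ∧
      ratFun C D s = ratFun C D t + k * π := by
  obtain ⟨htI, s, hsI, hst, hPst⟩ := ht
  obtain ⟨k, hθ, hr⟩ := exists_int_of_polar_eq hrt (congrArg Prod.fst hPst)
    (congrArg Prod.snd hPst)
  have hr2 : ratFun A B s ^ 2 = ratFun A B t ^ 2 := by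
    rw [hr, mul_pow, ← sq_abs ((-1 : ℝ) ^ k), abs_neg_one_zpow, one_pow, one_mul]
  have hsF : s ∉ F := fun hsF => hFt s hsF hr2
  have hk : k ≠ 0 := by
    rintro rfl
    exact hst (hF s t (hI hsI) (hI htI) hsF htF (by simpa using hr) (by simpa using hθ))
  refine ⟨s, hsI, k, hk, abs_le_ceil_of_abs_mul_pi_le ?_, hr2, hθ⟩
  calc |(k : ℝ) * π| = |ratFun C D s - ratFun C D t| := by rw [hθ, add_sub_cancel_left]
    _ ≤ |ratFun C D s| + |ratFun C D t| := abs_sub _ _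
    _ ≤ 2 * M := by linarith [hM s hsI, hM t htI]

end SelfIntersections

lemma finite_selfIntersectionParams_of_bounded {A B C D : ℝ[X]} (hB : B ≠ 0) (hD : D ≠ 0)
    (hAB : IsCoprime A B) (hr : ¬ (A.natDegree = 0 ∧ B.natDegree = 0))
    (hproper : IsProperPolar A B C D) {I : Set ℝ} (hI : I ⊆ polarDomain B D) {M : ℝ}
    (hM : ∀ t ∈ I, |ratFun C D t| ≤ M) : (selfIntersectionParams A B C D I).Finite := by
  obtain ⟨F, hFfin, hF⟩ := hproper
  -- At a self-intersection `r(s) = ±r(t)`, so we work with the curve `t ↦ (r(t)², θ(t))`.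
  have hAB2 : IsCoprime (A ^ 2) (B ^ 2) := hAB.pow
  have hr2 : ¬ ((A ^ 2).natDegree = 0 ∧ (B ^ 2).natDegree = 0) := by
    simpa [natDegree_pow] using hr
  obtain ⟨h, hirr, hdeg, hh⟩ :=
    exists_irreducible_vanishesOnCurve (C := C) (D := D) (pow_ne_zero 2 hB) hD hAB2 hr2
  have hhΩ : ∀ s ∈ polarDomain B D, h.evalEval (ratFun (A ^ 2) (B ^ 2) s) (ratFun C D s) = 0 := by
    rw [← polarDomain_pow_left two_ne_zero]
    exact hh
  have hshift : ∀ k ∈ {k : ℤ | k ≠ 0 ∧ |k| ≤ ⌈2 * M / π⌉}, {t ∈ polarDomain B D |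
      h.evalEval (ratFun (A ^ 2) (B ^ 2) t) (ratFun C D t + k * π) = 0}.Finite := fun k hk => by
    simpa only [polarDomain_pow_left two_ne_zero] using finite_setOf_evalEval_add_eq_zero hAB2
      hr2 hirr hdeg hh (mul_ne_zero (Int.cast_ne_zero.mpr hk.1) pi_ne_zero)
  have hks : {k : ℤ | k ≠ 0 ∧ |k| ≤ ⌈2 * M / π⌉}.Finite :=
    (Set.finite_Icc (-⌈2 * M / π⌉) ⌈2 * M / π⌉).subset fun k hk => abs_le.mp hk.2
  have hFimage := finite_setOf_ratFun_mem hAB2 hr2 (hFfin.image (ratFun (A ^ 2) (B ^ 2)))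
  refine (((hFfin.union (finite_setOf_ratFun_eq hAB hr 0)).union hFimage).union
    (hks.biUnion hshift)).subset ?_
  intro t ht
  have htΩ := hI ht.1
  by_cases htF : t ∈ F
  · exact .inl (.inl (.inl htF))
  by_cases hrt : ratFun A B t = 0
  · exact .inl (.inl (.inr ⟨htΩ.1, hrt⟩))
  by_cases hFt : ∃ s ∈ F, ratFun A B s ^ 2 = ratFun A B t ^ 2
  · obtain ⟨s, hs, hst⟩ := hFt
    exact .inl (.inr ⟨by simpa using htΩ.1, s, hs, by simpa only [ratFun_pow] using hst⟩)
  push Not at hFt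
  obtain ⟨s, hsI, k, hk, hkK, hr2, hθ⟩ :=
    exists_int_shift_of_mem_selfIntersectionParams hF hI hM ht htF hrt hFt
  refine .inr (Set.mem_biUnion ⟨hk, hkK⟩ ⟨htΩ, ?_⟩)
  rw [ratFun_pow, ← hr2, ← ratFun_pow, ← hθ]
  exact hhΩ s (hI hsI)

section LimitFeatures

open Filter Topology

variable {C D : ℝ[X]}

lemma tendsto_abs_ratFun_nhdsNE_atTop (hD : D ≠ 0) (hCD : IsCoprime C D) {t₀ : ℝ}
    (ht₀ : D.eval t₀ = 0) : Tendsto (fun t => |ratFun C D t|) (𝓝[≠] t₀) atTop := by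
  have hC : C.eval t₀ ≠ 0 := fun hC => by
    obtain ⟨u, v, huv⟩ := hCD
    simpa [hC, ht₀] using congrArg (eval t₀) huv
  have hDlim : Tendsto (fun t => D.eval t) (𝓝[≠] t₀) (𝓝[≠] 0) :=
    tendsto_nhdsWithin_iff.mpr ⟨ht₀ ▸ D.continuous.continuousAt.tendsto.mono_left
      nhdsWithin_le_nhds, nhdsNE_le_cofinite t₀ (eventually_cofinite_not_isRoot hD)⟩
  refine ((C.continuous.tendsto t₀).abs.mono_left nhdsWithin_le_nhds |>.pos_mul_atTop
    (abs_pos.mpr hC) (tendsto_norm_inv_nhdsNE_zero_atTop.comp hDlim)).congr fun t => ?_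
  simp [ratFun, div_eq_mul_inv]

lemma exists_bound_ratFun_of_isBounded {K : Set ℝ} (hK : IsBounded K)
    (hD : ∀ t ∈ closure K, D.eval t ≠ 0) : ∃ M, ∀ t ∈ K, |ratFun C D t| ≤ M := by
  obtain ⟨M, hM⟩ := hK.isCompact_closure.exists_bound_of_continuousOn (f := ratFun C D)
    (C.continuous.continuousOn.div D.continuous.continuousOn hD)
  exact ⟨M, fun t ht => hM t (subset_closure ht)⟩

lemma eventually_abs_ratFun_le_of_degree_le (h : C.degree ≤ D.degree) :
    ∃ M, ∀ᶠ t in cobounded ℝ, |ratFun C D t| ≤ M := by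
  obtain ⟨c, hc, hCD⟩ := (isBigO_cobounded_of_degree_le h).exists_pos
  refine ⟨c, hCD.bound.mono fun t ht => ?_⟩
  rw [ratFun, abs_div]
  exact div_le_of_le_mul₀ (abs_nonneg _) hc.le ht

lemma tendsto_ratFun_atTop_of_degree_lt (hD : D ≠ 0) (h : D.degree < C.degree) :
    Tendsto (ratFun C D) atTop atTop ∨ Tendsto (ratFun C D) atTop atBot := by
  rcases le_or_gt 0 (C.leadingCoeff / D.leadingCoeff) with hc | hc
  exacts [.inl (div_tendsto_atTop_of_degree_gt C D h hD hc),
    .inr (div_tendsto_atBot_of_degree_gt C D h hD hc.le)]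

lemma tendsto_ratFun_atBot_of_degree_lt (hD : D ≠ 0) (h : D.degree < C.degree) :
    Tendsto (ratFun C D) atBot atTop ∨ Tendsto (ratFun C D) atBot atBot := by
  have hD' : D.comp (-X) ≠ 0 := by
    rwa [Ne, ← degree_eq_bot, degree_comp_neg_X, degree_eq_bot]
  have hreflect : ratFun C D = ratFun (C.comp (-X)) (D.comp (-X)) ∘ Neg.neg :=
    funext fun t => by simp [ratFun]
  rw [hreflect]
  exact (tendsto_ratFun_atTop_of_degree_lt hD' (by rwa [degree_comp_neg_X, degree_comp_neg_X])).imp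
    (·.comp tendsto_neg_atBot_atTop) (·.comp tendsto_neg_atBot_atTop)

lemma limit_feature_of_not_bounded (hD : D ≠ 0) (hCD : IsCoprime C D) {I : Set ℝ}
    (hI : ¬ ∃ M : ℝ, ∀ t ∈ I, |ratFun C D t| ≤ M) :
    (∃ t₀ : ℝ, D.eval t₀ = 0 ∧ t₀ ∈ closure I ∧
        (Tendsto (fun t => |ratFun C D t|) (𝓝[<] t₀) atTop ∨
         Tendsto (fun t => |ratFun C D t|) (𝓝[>] t₀) atTop)) ∨
     (¬ BddAbove I ∧ (Tendsto (ratFun C D) atTop atTop ∨ Tendsto (ratFun C D) atTop atBot)) ∨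
     (¬ BddBelow I ∧ (Tendsto (ratFun C D) atBot atTop ∨ Tendsto (ratFun C D) atBot atBot)) := by
  by_cases hpole : ∃ t₀, D.eval t₀ = 0 ∧ t₀ ∈ closure I
  · obtain ⟨t₀, ht₀, hcl⟩ := hpole
    exact .inl ⟨t₀, ht₀, hcl, .inr ((tendsto_abs_ratFun_nhdsNE_atTop hD hCD ht₀).mono_left
      (nhdsWithin_mono _ fun _ ht => ne_of_gt ht))⟩
  push Not at hpole
  have hloc : ∀ K, IsBounded K → ∃ M, ∀ t ∈ I ∩ K, |ratFun C D t| ≤ M := fun K hK =>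
    exists_bound_ratFun_of_isBounded (hK.subset Set.inter_subset_right)
      fun t ht h0 => hpole t h0 (closure_mono Set.inter_subset_left ht)
  rcases lt_or_ge D.degree C.degree with hdeg | hdeg
  · refine .inr ?_
    by_cases hA : BddAbove I
    · by_cases hB : BddBelow I
      · obtain ⟨M, hM⟩ := hloc I (Metric.isBounded_of_bddAbove_of_bddBelow hA hB)
        exact absurd ⟨M, fun t ht => hM t ⟨ht, ht⟩⟩ hI
      · exact .inr ⟨hB, tendsto_ratFun_atBot_of_degree_lt hD hdeg⟩
    · exact .inl ⟨hA, tendsto_ratFun_atTop_of_degree_lt hD hdeg⟩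
  · obtain ⟨M₁, hM₁⟩ := eventually_abs_ratFun_le_of_degree_le hdeg
    obtain ⟨M₂, hM₂⟩ := hloc _ (isBounded_compl_iff.mpr hM₁)
    refine absurd ⟨max M₁ M₂, fun t ht => ?_⟩ hI
    by_cases h : |ratFun C D t| ≤ M₁
    exacts [h.trans (le_max_left _ _), (hM₂ t ⟨ht, h⟩).trans (le_max_right _ _)]

end LimitFeatures

theorem self_intersections_accumulate_at_limit_feature_general
    (A B C D : Polynomial ℝ) (hB : B ≠ 0) (hD : D ≠ 0)
    (hAB : IsCoprime A B) (hCD : IsCoprime C D)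
    (hr : ¬ (A.natDegree = 0 ∧ B.natDegree = 0))
    (hproper : IsProperPolar A B C D)
    (I : Set ℝ) (hI : I ⊆ polarDomain B D)
    (hinf : {t ∈ I | ∃ s ∈ I, s ≠ t ∧ polarCurve A B C D s = polarCurve A B C D t}.Infinite) :
    (¬ ∃ M : ℝ, ∀ t ∈ I, |ratFun C D t| ≤ M) ∧
    ((∃ t₀ : ℝ, D.eval t₀ = 0 ∧ t₀ ∈ closure I ∧
        (Tendsto (fun t => |ratFun C D t|) (nhdsWithin t₀ (Set.Iio t₀)) atTop ∨
         Tendsto (fun t => |ratFun C D t|) (nhdsWithin t₀ (Set.Ioi t₀)) atTop)) ∨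
     (¬ BddAbove I ∧
        (Tendsto (ratFun C D) atTop atTop ∨ Tendsto (ratFun C D) atTop atBot)) ∨
     (¬ BddBelow I ∧
        (Tendsto (ratFun C D) atBot atTop ∨ Tendsto (ratFun C D) atBot atBot))) := by
  have hunbounded : ¬ ∃ M : ℝ, ∀ t ∈ I, |ratFun C D t| ≤ M := fun ⟨_, hM⟩ =>
    hinf (finite_selfIntersectionParams_of_bounded hB hD hAB hr hproper hI hM)
  exact ⟨hunbounded, limit_feature_of_not_bounded hD hCD hunbounded⟩

theorem self_intersections_accumulate_at_limit_feature
    (A B C D : Polynomial ℝ) (hB : B ≠ 0) (hD : D ≠ 0)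
    (hAB : IsCoprime A B) (hCD : IsCoprime C D)
    (hr : ¬ (A.natDegree = 0 ∧ B.natDegree = 0))
    (hθ : ¬ (C.natDegree = 0 ∧ D.natDegree = 0))
    (hproper : IsProperPolar A B C D)
    (I : Set ℝ) (hI : I ⊆ polarDomain B D)
    (hinf : {t ∈ I | ∃ s ∈ I, s ≠ t ∧ polarCurve A B C D s = polarCurve A B C D t}.Infinite) :
    (¬ ∃ M : ℝ, ∀ t ∈ I, |ratFun C D t| ≤ M) ∧
    ((∃ t₀ : ℝ, D.eval t₀ = 0 ∧ t₀ ∈ closure I ∧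
        (Tendsto (fun t => |ratFun C D t|) (nhdsWithin t₀ (Set.Iio t₀)) atTop ∨
         Tendsto (fun t => |ratFun C D t|) (nhdsWithin t₀ (Set.Ioi t₀)) atTop)) ∨
     (¬ BddAbove I ∧
        (Tendsto (ratFun C D) atTop atTop ∨ Tendsto (ratFun C D) atTop atBot)) ∨
     (¬ BddBelow I ∧
        (Tendsto (ratFun C D) atBot atTop ∨ Tendsto (ratFun C D) atBot atBot))) :=
  self_intersections_accumulate_at_limit_feature_general A B C D hB hD hAB hCD hr hproper I hI hinf
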